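/- arXiv:0804.2233 — 3 statements merged into one kernel-verified Lean document; each statement's English description precedes it below -/
import Mathlib

section
/- Let n ∈ ℤ[ω] with N(n) squarefree and coprime to 3, where ω = e^{2πi/3} and N denotes the norm. Then N(n) is squarefree in ℤ if and only if n is squarefree in ℤ[ω] and n has no rational prime divisor. -/
/-- The ring of Eisenstein integers `ℤ[ω]`, represented as pairs `a + b·ω`. -/
@[ext]
structure Eisenstein where
  a : ℤ
  b : ℤ

namespace Eisenstein

instance : Zero Eisenstein := ⟨⟨0, 0⟩⟩
instance : One Eisenstein := ⟨⟨1, 0⟩⟩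
instance : Add Eisenstein := ⟨fun x y => ⟨x.a + y.a, x.b + y.b⟩⟩
instance : Neg Eisenstein := ⟨fun x => ⟨-x.a, -x.b⟩⟩
instance : Mul Eisenstein :=
  ⟨fun x y => ⟨x.a * y.a - x.b * y.b, x.a * y.b + x.b * y.a - x.b * y.b⟩⟩

@[simp] lemma zero_a : (0 : Eisenstein).a = 0 := rfl
@[simp] lemma zero_b : (0 : Eisenstein).b = 0 := rfl
@[simp] lemma one_a : (1 : Eisenstein).a = 1 := rfl
@[simp] lemma one_b : (1 : Eisenstein).b = 0 := rfl
@[simp] lemma add_a (x y : Eisenstein) : (x + y).a = x.a + y.a := rfl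
@[simp] lemma add_b (x y : Eisenstein) : (x + y).b = x.b + y.b := rfl
@[simp] lemma neg_a (x : Eisenstein) : (-x).a = -x.a := rfl
@[simp] lemma neg_b (x : Eisenstein) : (-x).b = -x.b := rfl
@[simp] lemma mul_a (x y : Eisenstein) : (x * y).a = x.a * y.a - x.b * y.b := rfl
@[simp] lemma mul_b (x y : Eisenstein) : (x * y).b = x.a * y.b + x.b * y.a - x.b * y.b := rfl

instance : CommRing Eisenstein where
  add_assoc x y z := by ext <;> simp <;> ring
  zero_add x := by ext <;> simp
  add_zero x := by ext <;> simp
  add_comm x y := by ext <;> simp <;> ring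
  neg_add_cancel x := by ext <;> simp
  mul_assoc x y z := by ext <;> simp <;> ring
  one_mul x := by ext <;> simp
  mul_one x := by ext <;> simp
  left_distrib x y z := by ext <;> simp <;> ring
  right_distrib x y z := by ext <;> simp <;> ring
  mul_comm x y := by ext <;> simp <;> ring
  zero_mul x := by ext <;> simp
  mul_zero x := by ext <;> simp
  nsmul := nsmulRec
  zsmul := zsmulRec

/-- The primitive cube root of unity `ω` in `ℤ[ω]`. -/
def ω : Eisenstein := ⟨0, 1⟩

/-- Complex conjugation on `ℤ[ω]`. -/
def conj (x : Eisenstein) : Eisenstein := ⟨x.a - x.b, -x.b⟩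

/-- The norm `N(a + bω) = a² − ab + b²`. -/
def norm (x : Eisenstein) : ℤ := x.a ^ 2 - x.a * x.b + x.b ^ 2

/-- The embedding of `ℤ[ω]` into `ℂ`, with `ω ↦ e^{2πi/3}`. -/
noncomputable def toC (x : Eisenstein) : ℂ :=
  (x.a : ℂ) + (x.b : ℂ) * Complex.exp (2 * Real.pi * Complex.I / 3)

/-- `R` is a complete system of residues modulo `n` in `ℤ[ω]`. -/
def IsResidueSystem (n : Eisenstein) (R : Finset Eisenstein) : Prop :=
  ∀ x : Eisenstein, ∃! d, d ∈ R ∧ n ∣ x - d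

/-- `ě(z) = exp(2πi(z + z̄))`. -/
noncomputable def eE (z : ℂ) : ℂ :=
  Complex.exp (2 * Real.pi * Complex.I * (z + (starRingEnd ℂ) z))

/-- `χ` is the cubic residue symbol `(m/n)₃` on `ℤ[ω]` (with values `0, 1, ω, ω²` in `ℤ[ω]`):
it is completely multiplicative in both arguments and is determined at prime moduli `π ∤ 3` by
`(m/π)₃ ≡ m^{(N(π)−1)/3} (mod π)`, `(m/π)₃ ∈ {1, ω, ω²}` for `π ∤ m`, and `(m/π)₃ = 0` for
`π ∣ m`. -/
def IsCubicResidueSymbol (χ : Eisenstein → Eisenstein → Eisenstein) : Prop :=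
  (∀ m₁ m₂ n, χ (m₁ * m₂) n = χ m₁ n * χ m₂ n) ∧
  (∀ m n₁ n₂, χ m (n₁ * n₂) = χ m n₁ * χ m n₂) ∧
  (∀ m π : Eisenstein, Prime π → ¬ π ∣ 3 → π ∣ m → χ m π = 0) ∧
  (∀ m π : Eisenstein, Prime π → ¬ π ∣ 3 → ¬ π ∣ m →
    χ m π ∈ ({1, ω, ω ^ 2} : Set Eisenstein) ∧
      π ∣ m ^ ((norm π - 1) / 3).toNat - χ m π)

/-- The generalized cubic Gauss sum `g(r,n) = Σ_{x mod n} (x/n)₃ ě(rx/n)`, computed with respect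
to a complete residue system `R` modulo `n`. -/
noncomputable def gSum (χ : Eisenstein → Eisenstein → Eisenstein) (r n : Eisenstein)
    (R : Finset Eisenstein) : ℂ :=
  ∑ x ∈ R, toC (χ x n) * eE (toC r * toC x / toC n)

end Eisenstein

/-! `ℤ[ω]` is Euclidean for the norm (round `x ȳ / N(y)` coordinatewise), hence factorial, and
a rational prime `p` is either prime in `ℤ[ω]` or equal to `π π̄` for a prime `π`. Suppose
`p² ∣ N(n) = n n̄` with `n` squarefree. If `p` is prime in `ℤ[ω]` it divides `n` or `n̄`, hence
`n`. Otherwise, up to conjugation, `n = π m` with `π ∤ m`; then `p ∣ m m̄`, so `π ∣ m̄`, i.e.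
`π̄ ∣ m`, and again `p = π π̄ ∣ n`. The converse follows from multiplicativity of the norm. -/

namespace Eisenstein

lemma intCast_def (k : ℤ) : (k : Eisenstein) = ⟨k, 0⟩ := by
  induction k using Int.induction_on with
  | zero => ext <;> simp
  | succ n ih => rw [Int.cast_add, Int.cast_one, ih]; ext <;> simp
  | pred n ih => rw [Int.cast_sub, Int.cast_one, ih]; ext <;> simp [sub_eq_add_neg]

@[simp] lemma intCast_a (k : ℤ) : (k : Eisenstein).a = k := by rw [intCast_def]
@[simp] lemma intCast_b (k : ℤ) : (k : Eisenstein).b = 0 := by rw [intCast_def]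

@[simp] lemma natCast_a (k : ℕ) : (k : Eisenstein).a = k := by
  rw [← Int.cast_natCast, intCast_a]
@[simp] lemma natCast_b (k : ℕ) : (k : Eisenstein).b = 0 := by
  rw [← Int.cast_natCast, intCast_b]

@[simp] lemma sub_a (x y : Eisenstein) : (x - y).a = x.a - y.a := by
  simp [sub_eq_add_neg]
@[simp] lemma sub_b (x y : Eisenstein) : (x - y).b = x.b - y.b := by
  simp [sub_eq_add_neg]

lemma norm_mul (x y : Eisenstein) : norm (x * y) = norm x * norm y := by
  simp only [norm, mul_a, mul_b]; ring

lemma norm_natCast (k : ℕ) : norm (k : Eisenstein) = (k : ℤ) ^ 2 := by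
  simp [norm]

lemma norm_dvd_norm {x y : Eisenstein} (h : x ∣ y) : norm x ∣ norm y := by
  obtain ⟨z, rfl⟩ := h
  exact ⟨norm z, norm_mul x z⟩

lemma four_mul_norm (x : Eisenstein) : 4 * norm x = (2 * x.a - x.b) ^ 2 + 3 * x.b ^ 2 := by
  unfold norm; ring

lemma norm_nonneg (x : Eisenstein) : 0 ≤ norm x := by
  nlinarith [four_mul_norm x, sq_nonneg (2 * x.a - x.b), sq_nonneg x.b]

lemma norm_eq_zero_iff {x : Eisenstein} : norm x = 0 ↔ x = 0 := by
  refine ⟨fun h => ?_, fun h => by simp [h, norm]⟩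
  have hb : x.b = 0 := by
    nlinarith [four_mul_norm x, sq_nonneg (2 * x.a - x.b), sq_nonneg x.b]
  have ha : x.a = 0 := by
    simpa [norm, hb] using h
  ext <;> assumption

lemma norm_conj (x : Eisenstein) : norm (conj x) = norm x := by
  simp only [norm, conj]; ring

lemma mul_conj (x : Eisenstein) : x * conj x = (norm x : Eisenstein) := by
  rw [intCast_def]; ext <;> simp [conj, norm] <;> ring

lemma conj_conj (x : Eisenstein) : conj (conj x) = x := by
  ext <;> simp [conj]

lemma conj_natCast (k : ℕ) : conj (k : Eisenstein) = k := by
  ext <;> simp [conj]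

def conjEquiv : Eisenstein ≃+* Eisenstein where
  toFun := conj
  invFun := conj
  left_inv := conj_conj
  right_inv := conj_conj
  map_mul' x y := by ext <;> simp [conj] <;> ring
  map_add' x y := by ext <;> simp [conj] <;> ring

@[simp] lemma conjEquiv_apply (x : Eisenstein) : conjEquiv x = conj x := rfl

lemma conj_mul (x y : Eisenstein) : conj (x * y) = conj x * conj y :=
  map_mul conjEquiv x y

lemma prime_conj {π : Eisenstein} (hπ : Prime π) : Prime (conj π) :=
  (MulEquiv.prime_iff conjEquiv).mpr hπ

lemma dvd_conj_iff {x y : Eisenstein} : x ∣ conj y ↔ conj x ∣ y := by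
  rw [← map_dvd_iff conjEquiv]
  simp [conj_conj]

lemma isUnit_iff_norm_eq_one {x : Eisenstein} : IsUnit x ↔ norm x = 1 := by
  refine ⟨fun ⟨u, hu⟩ => ?_, fun h => IsUnit.of_mul_eq_one (conj x) (by rw [mul_conj, h]; rfl)⟩
  have : norm x * norm ↑u⁻¹ = 1 := by rw [← norm_mul, ← hu, u.mul_inv]; rfl
  exact Int.eq_one_of_mul_eq_one_right (norm_nonneg x) this

lemma isUnit_norm_iff {x : Eisenstein} : IsUnit (norm x) ↔ IsUnit x := by
  rw [Int.isUnit_iff, isUnit_iff_norm_eq_one]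
  have := norm_nonneg x
  omega

lemma norm_lt_sq_of_two_mul_abs_le {s t d : ℤ} (hd : 0 < d) (hs : 2 * |s| ≤ d)
    (ht : 2 * |t| ≤ d) : norm ⟨s, t⟩ < d ^ 2 := by
  unfold norm
  nlinarith [abs_mul_abs_self s, abs_mul_abs_self t, abs_mul s t, neg_abs_le (s * t),
    mul_le_mul hs ht (by positivity) hd.le, mul_le_mul hs hs (by positivity) hd.le,
    mul_le_mul ht ht (by positivity) hd.le]

/-- `x / y = x * conj y / N(y)`, with both coordinates rounded to a nearest integer. -/
def roundDiv (x y : Eisenstein) : Eisenstein :=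
  ⟨(x * conj y).a.bdiv (norm y).toNat, (x * conj y).b.bdiv (norm y).toNat⟩

lemma roundDiv_zero (x : Eisenstein) : roundDiv x 0 = 0 := by
  ext <;> simp [roundDiv, norm, Int.bdiv]

lemma norm_sub_roundDiv_mul_lt (x : Eisenstein) {y : Eisenstein} (hy : y ≠ 0) :
    norm (x - roundDiv x y * y) < norm y := by
  set d := (norm y).toNat
  have hd : (d : ℤ) = norm y := Int.toNat_of_nonneg (norm_nonneg y)
  have hd0 : 0 < d := by have := norm_eq_zero_iff.not.mpr hy; omega
  set z := x * conj y
  have hrem : (x - roundDiv x y * y) * conj y = ⟨z.a.bmod d, z.b.bmod d⟩ := by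
    have hz : (x - roundDiv x y * y) * conj y = z - roundDiv x y * (d : Eisenstein) := by
      rw [sub_mul, mul_assoc, mul_conj, ← hd, Int.cast_natCast]
    rw [hz]
    have hq : roundDiv x y = ⟨z.a.bdiv d, z.b.bdiv d⟩ := rfl
    ext <;> simp only [hq, sub_a, sub_b, mul_a, mul_b, natCast_a, natCast_b] <;>
      linarith [Int.bmod_add_bdiv z.a d, Int.bmod_add_bdiv z.b d]
  have hbound (u : ℤ) : 2 * |u.bmod d| ≤ d := by
    have := Int.le_bmod (x := u) hd0
    have := Int.bmod_lt (x := u) hd0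
    rcases abs_cases (u.bmod d) with ⟨h, _⟩ | ⟨h, _⟩ <;> omega
  have hlt : norm (x - roundDiv x y * y) * norm y < norm y * norm y := by
    rw [← norm_conj y, ← norm_mul, hrem, norm_conj, ← hd, ← sq]
    exact norm_lt_sq_of_two_mul_abs_le (by omega) (hbound _) (hbound _)
  exact lt_of_mul_lt_mul_right hlt (norm_nonneg y)

noncomputable instance : EuclideanDomain Eisenstein where
  exists_pair_ne := ⟨0, 1, fun h => by simpa using congrArg a h⟩
  quotient := roundDiv
  quotient_zero := roundDiv_zero
  remainder x y := x - roundDiv x y * y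
  quotient_mul_add_remainder_eq x y := by ring
  r x y := (norm x).natAbs < (norm y).natAbs
  r_wellFounded := (measure fun x => (norm x).natAbs).wf
  remainder_lt x y hy :=
    Int.natAbs_lt_natAbs_of_nonneg_of_lt (norm_nonneg _) (norm_sub_roundDiv_mul_lt x hy)
  mul_left_not_lt x y hy := by
    rw [not_lt, norm_mul, Int.natAbs_mul]
    exact Nat.le_mul_of_pos_right _ (Int.natAbs_pos.mpr (norm_eq_zero_iff.not.mpr hy))

lemma prime_natCast_or_exists_prime_mul_conj_eq {p : ℕ} (hp : p.Prime) :
    Prime (p : Eisenstein) ∨ ∃ π : Eisenstein, Prime π ∧ π * conj π = p := by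
  have hp2 : (2 : ℤ) ≤ p := by exact_mod_cast hp.two_le
  have hp1 : ¬ IsUnit (p : Eisenstein) := by
    rw [isUnit_iff_norm_eq_one, norm_natCast]; nlinarith
  have hp0 : (p : Eisenstein) ≠ 0 := by
    rw [ne_eq, ← norm_eq_zero_iff, norm_natCast]; positivity
  obtain ⟨π, hπ, c, hc⟩ := WfDvdMonoid.exists_irreducible_factor hp1 hp0
  have hnorm : norm π * norm c = p ^ 2 := by rw [← norm_mul, ← hc, norm_natCast]
  obtain ⟨i, hi, hπi⟩ := (dvd_prime_pow (Nat.prime_iff_prime_int.mp hp) 2).mp ⟨_, hnorm.symm⟩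
  replace hπi : norm π = p ^ i := by
    rcases Int.associated_iff.mp hπi with h | h
    · exact h
    · nlinarith [norm_nonneg π, pow_pos (show (0 : ℤ) < p by omega) i]
  interval_cases i
  · exact absurd (isUnit_iff_norm_eq_one.mpr (by simpa using hπi)) hπ.not_isUnit
  · exact .inr ⟨π, hπ.prime, by rw [mul_conj, hπi, pow_one, Int.cast_natCast]⟩
  · have hc1 : IsUnit c := isUnit_iff_norm_eq_one.mpr <| by
      rw [hπi] at hnorm
      exact (mul_eq_left₀ (by positivity)).mp hnorm
    have hπp : Associated π p := ⟨hc1.unit, hc.symm⟩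
    exact .inl (hπp.prime hπ.prime)

lemma natCast_dvd_of_prime_dvd {n π : Eisenstein} {p : ℕ} (hn : Squarefree n) (hπ : Prime π)
    (hπp : π * conj π = p) (hπn : π ∣ n) (hpn : (p : Eisenstein) * p ∣ n * conj n) :
    (p : Eisenstein) ∣ n := by
  obtain ⟨m, rfl⟩ := hπn
  have hπm : ¬ π ∣ m := fun ⟨k, hk⟩ => hπ.not_isUnit (hn π ⟨k, by rw [hk, mul_assoc]⟩)
  have hpm : (p : Eisenstein) ∣ m * conj m := by
    have hp0 : (p : Eisenstein) ≠ 0 := hπp ▸ mul_ne_zero hπ.ne_zero (prime_conj hπ).ne_zero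
    rw [conj_mul, mul_mul_mul_comm, hπp] at hpn
    exact (mul_dvd_mul_iff_left hp0).mp hpn
  obtain ⟨k, rfl⟩ : conj π ∣ m := by
    rw [← dvd_conj_iff]
    exact (hπ.dvd_or_dvd ((Dvd.intro _ hπp).trans hpm)).resolve_left hπm
  exact ⟨k, by rw [← mul_assoc, hπp]⟩

lemma natCast_dvd_of_mul_self_dvd_mul_conj {n : Eisenstein} {p : ℕ} (hn : Squarefree n)
    (hp : p.Prime) (hpn : (p : Eisenstein) * p ∣ n * conj n) : (p : Eisenstein) ∣ n := by
  rcases prime_natCast_or_exists_prime_mul_conj_eq hp with hprime | ⟨π, hπ, hπp⟩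
  · rcases hprime.dvd_or_dvd (dvd_of_mul_right_dvd hpn) with h | h
    · exact h
    · rwa [dvd_conj_iff, conj_natCast] at h
  · rcases hπ.dvd_or_dvd ((Dvd.intro _ hπp).trans (dvd_of_mul_right_dvd hpn)) with h | h
    · exact natCast_dvd_of_prime_dvd hn hπ hπp h hpn
    · refine natCast_dvd_of_prime_dvd hn (prime_conj hπ) ?_ (dvd_conj_iff.mp h) hpn
      rw [conj_conj, mul_comm, hπp]

lemma squarefree_of_squarefree_norm {n : Eisenstein} (h : Squarefree (norm n)) : Squarefree n :=
  fun x hx => isUnit_norm_iff.mp (h _ (by simpa [norm_mul] using norm_dvd_norm hx))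

lemma not_natCast_dvd_of_squarefree_norm {n : Eisenstein} (h : Squarefree (norm n)) {p : ℕ}
    (hp : p.Prime) : ¬ (p : Eisenstein) ∣ n := fun hpn => by
  have := h p (by simpa [norm_natCast, sq] using norm_dvd_norm hpn)
  rw [Int.isUnit_iff] at this
  have := hp.two_le
  omega

end Eisenstein

open Eisenstein in
theorem statement_3_general (n : Eisenstein) :
    Squarefree (norm n) ↔
      Squarefree n ∧ ∀ p : ℕ, p.Prime → ¬ ((p : Eisenstein) ∣ n) := by
  refine ⟨fun h => ⟨squarefree_of_squarefree_norm h,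
    fun p hp => not_natCast_dvd_of_squarefree_norm h hp⟩, fun ⟨hn, hnp⟩ => ?_⟩
  rw [← Int.squarefree_natAbs, Nat.squarefree_iff_prime_squarefree]
  intro p hp hpp
  refine hnp p hp (natCast_dvd_of_mul_self_dvd_mul_conj hn hp ?_)
  have hpp' : ((p * p : ℕ) : ℤ) ∣ norm n := Int.ofNat_dvd_left.mpr hpp
  simpa [mul_conj] using map_dvd (Int.castRingHom Eisenstein) hpp'

open Eisenstein in
/-- A Eisenstein integer `n` with norm coprime to 3 has squarefree norm if and only if `n` is
squarefree in `ℤ[ω]` and `n` has no rational prime divisor. -/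
theorem statement_3 (n : Eisenstein) (h3 : IsCoprime (norm n) 3) :
    Squarefree (norm n) ↔
      Squarefree n ∧ ∀ p : ℕ, p.Prime → ¬ ((p : Eisenstein) ∣ n) :=
  statement_3_general n
end

section
/- For n ∈ ℤ[ω] with n ≡ 1 (mod 3), the sum Σ_{d | n, d ∈ ℤ, d ≡ 1 (mod 3)} μ(|d|) equals 1 if n has no rational prime divisor, and 0 otherwise. -/
/-!
A rational integer `k` divides `a + bω` iff it divides both `a` and `b`, so the rational
divisors of `n` are exactly the divisors of `c = gcd(a, b)`, all of absolute value at most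
`c ≤ N(n)`. From `n ≡ 1 (mod 3)` we get `3 ∤ c`, so every positive divisor `m` of `c` has
exactly one signed version `±m ≡ 1 (mod 3)`. The sum is therefore `Σ_{m ∣ c} μ(m) = [c = 1]`,
and `c = 1` means precisely that no rational prime divides `n`.
-/

namespace Eisenstein

lemma norm_intCast (k : ℤ) : norm (k : Eisenstein) = k ^ 2 := by
  simp [norm]

lemma norm_pos {x : Eisenstein} (hx : x ≠ 0) : 0 < norm x := by
  have hab : x.a ≠ 0 ∨ x.b ≠ 0 := by
    by_contra! h; exact hx (Eisenstein.ext h.1 h.2)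
  unfold norm
  rcases hab with h | h
  · nlinarith [sq_nonneg (2 * x.b - x.a), sq_pos_of_ne_zero h]
  · nlinarith [sq_nonneg (2 * x.a - x.b), sq_pos_of_ne_zero h]

lemma intCast_dvd_iff {k : ℤ} {x : Eisenstein} :
    (k : Eisenstein) ∣ x ↔ k ∣ x.a ∧ k ∣ x.b := by
  constructor
  · rintro ⟨y, rfl⟩
    simp
  · rintro ⟨⟨u, hu⟩, ⟨v, hv⟩⟩
    exact ⟨⟨u, v⟩, by ext <;> simp [hu, hv]⟩

def content (x : Eisenstein) : ℕ := Int.gcd x.a x.b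

lemma intCast_dvd_iff_dvd_content {k : ℤ} {x : Eisenstein} :
    (k : Eisenstein) ∣ x ↔ k ∣ (content x : ℤ) := by
  rw [intCast_dvd_iff, content, Int.dvd_coe_gcd_iff]

lemma abs_le_norm_of_intCast_dvd {k : ℤ} {x : Eisenstein} (hx : x ≠ 0)
    (hk : (k : Eisenstein) ∣ x) : |k| ≤ norm x := by
  obtain ⟨y, rfl⟩ := hk
  have hy : 0 < norm y := norm_pos (right_ne_zero_of_mul hx)
  calc |k| ≤ k ^ 2 := Int.abs_eq_natAbs k ▸ Int.natAbs_le_self_sq k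
    _ ≤ k ^ 2 * norm y := le_mul_of_one_le_right (sq_nonneg k) hy
    _ = norm (k * y) := by rw [norm_mul, norm_intCast]

lemma content_ne_zero {x : Eisenstein} (hx : x ≠ 0) : content x ≠ 0 := by
  rw [content, Ne, Int.gcd_eq_zero_iff]
  exact fun h => hx (Eisenstein.ext h.1 h.2)

lemma content_le_norm {x : Eisenstein} (hx : x ≠ 0) : (content x : ℤ) ≤ norm x :=
  (le_abs_self _).trans (abs_le_norm_of_intCast_dvd hx (intCast_dvd_iff_dvd_content.mpr dvd_rfl))

lemma content_eq_one_iff {x : Eisenstein} :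
    content x = 1 ↔ ∀ p : ℕ, p.Prime → ¬ (p : Eisenstein) ∣ x := by
  simp only [Nat.eq_one_iff_not_exists_prime_dvd, ← Int.cast_natCast (R := Eisenstein),
    intCast_dvd_iff_dvd_content, Int.natCast_dvd_natCast]

lemma three_dvd_sub_one_iff {x : Eisenstein} :
    (3 : Eisenstein) ∣ x - 1 ↔ 3 ∣ x.a - 1 ∧ 3 ∣ x.b := by
  rw [← Int.cast_ofNat, intCast_dvd_iff, sub_eq_add_neg x, sub_eq_add_neg x.a]
  simp only [add_a, add_b, neg_a, neg_b, one_a, one_b, neg_zero, add_zero]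

lemma not_three_dvd_content {x : Eisenstein} (hx : (3 : Eisenstein) ∣ x - 1) :
    ¬ 3 ∣ content x := fun h3 => by
  have h3a := (Int.natCast_dvd_natCast.mpr h3).trans (Int.gcd_dvd_left x.a x.b)
  have := (three_dvd_sub_one_iff.mp hx).1
  omega

end Eisenstein

open scoped ArithmeticFunction.Moebius

lemma ArithmeticFunction.sum_divisors_moebius (n : ℕ) :
    ∑ d ∈ n.divisors, μ d = if n = 1 then 1 else 0 := by
  rw [← ArithmeticFunction.coe_mul_zeta_apply, ArithmeticFunction.moebius_mul_coe_zeta,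
    ArithmeticFunction.one_apply]

lemma Int.sum_dvd_one_mod_three_eq_sum_divisors {M : Type*} [AddCommMonoid M] (f : ℕ → M)
    {g : ℕ} {B : ℤ} (hg : g ≠ 0) (h3 : ¬ 3 ∣ g) (hB : (g : ℤ) ≤ B) :
    ∑ d ∈ (Finset.Icc (-B) B).filter (fun d : ℤ => d % 3 = 1 ∧ d ∣ g), f d.natAbs =
      ∑ m ∈ g.divisors, f m := by
  -- `3 ∤ m`, so exactly one of `m`, `-m` is `≡ 1 (mod 3)`
  refine Finset.sum_nbij' Int.natAbs (fun m => if m % 3 = 1 then (m : ℤ) else -m)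
    ?_ ?_ ?_ ?_ fun _ _ => rfl
  · intro d hd
    simp only [Finset.mem_filter, Finset.mem_Icc] at hd
    simpa [Nat.mem_divisors, hg] using Int.dvd_natCast.mp hd.2.2
  · intro m hm
    simp only [Nat.mem_divisors] at hm
    have hm3 : ¬ 3 ∣ m := fun h => h3 (h.trans hm.1)
    have hm_le : (m : ℤ) ≤ g := by exact_mod_cast Nat.le_of_dvd (Nat.pos_of_ne_zero hg) hm.1
    have hm_dvd : (m : ℤ) ∣ g := Int.natCast_dvd_natCast.mpr hm.1
    simp only [Finset.mem_filter, Finset.mem_Icc]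
    split_ifs
    · exact ⟨⟨by omega, by omega⟩, by omega, hm_dvd⟩
    · exact ⟨⟨by omega, by omega⟩, by omega, neg_dvd.mpr hm_dvd⟩
  · intro d hd
    simp only [Finset.mem_filter, Finset.mem_Icc] at hd
    split_ifs <;> omega
  · intro m hm
    split_ifs <;> omega

open Eisenstein in
open scoped ArithmeticFunction ArithmeticFunction.Moebius in
/-- For `n ≡ 1 (mod 3)` in `ℤ[ω]`, the sum `Σ_{d ∣ n, d ∈ ℤ, d ≡ 1 (mod 3)} μ(|d|)` equals 1
if `n` has no rational prime divisor, and 0 otherwise. -/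
theorem statement_15 (n : Eisenstein) (hn : (3 : Eisenstein) ∣ n - 1) :
    haveI := Classical.dec
    (∑ d ∈ (Finset.Icc (-(norm n)) (norm n)).filter
        (fun d : ℤ => d % 3 = 1 ∧ (d : Eisenstein) ∣ n), μ d.natAbs)
      = if (∀ p : ℕ, p.Prime → ¬ ((p : Eisenstein) ∣ n)) then 1 else 0 := by
  have hn0 : n ≠ 0 := by
    rintro rfl
    simpa using (three_dvd_sub_one_iff.mp hn).1
  calc _ = ∑ d ∈ (Finset.Icc (-(norm n)) (norm n)).filter
          (fun d : ℤ => d % 3 = 1 ∧ d ∣ (content n : ℤ)), μ d.natAbs := by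
        congr! 3
        exact intCast_dvd_iff_dvd_content
    _ = ∑ m ∈ (content n).divisors, μ m :=
        Int.sum_dvd_one_mod_three_eq_sum_divisors _ (content_ne_zero hn0)
          (not_three_dvd_content hn) (content_le_norm hn0)
    _ = if content n = 1 then 1 else 0 := ArithmeticFunction.sum_divisors_moebius _
    _ = _ := by congr! 1; exact content_eq_one_iff
end

section
/- Assume the eighth moment bound Σ_{q ≤ Q} Σ*_{χ mod q} |L(1/2,χ)|^8 ≪ Q^{2+ε} over all primitive Dirichlet characters, and the first moment lower bound Σ over primitive cubic characters of conductor ≤ Q of |L(1/2,χ)| ≫ Q. Then the number N₃(Q) of primitive cubic Dirichlet characters χ of conductor ≤ Q with L(1/2,χ) ≠ 0 satisfies N₃(Q) ≫ Q^{6/7-ε}. -/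
/-!
Let `N` be the number of primitive cubic characters of conductor `≤ Q` with `L(1/2,χ) ≠ 0`.
Restricting the first moment to those characters and applying Hölder's inequality with exponents
`8` and `8/7` gives `(Σ |L(1/2,χ)|)⁸ ≤ N⁷ Σ |L(1/2,χ)|⁸`. The first moment is `≫ Q` and the eighth
moment over all primitive characters is `≪ Q^{2+7ε}`, so `Q⁸ ≪ N⁷ Q^{2+7ε}`, i.e. `N ≫ Q^{6/7-ε}`.
-/

open Finset

theorem sum_range_tsum_eq_sum_sigma {κ : ℕ → Type*} [∀ r, Fintype (κ r)] (Q : ℕ)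
    (f : (r : ℕ) → κ r → ℝ) :
    ∑ r ∈ range Q, ∑' x : κ r, f r x = ∑ x ∈ (range Q).sigma fun _ => univ, f x.1 x.2 := by
  simp only [sum_sigma, tsum_fintype]

theorem Nat.card_sigma_subtype_eq_card_filter {κ : ℕ → Type*} [∀ r, Fintype (κ r)] (Q : ℕ)
    (p : (Σ r, κ r) → Prop) [DecidablePred p] :
    Nat.card {x : Σ r, κ r // x.1 + 1 ≤ Q ∧ p x} =
      #{x ∈ (range Q).sigma (fun _ => univ) | p x} := by
  rw [← Nat.card_eq_finsetCard]
  refine Nat.card_congr (Equiv.subtypeEquivRight fun x => ?_)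
  simp only [mem_filter, mem_sigma, mem_range, mem_univ, and_true, Nat.lt_iff_add_one_le]

theorem pow_sum_le_card_support_pow_mul_sum_pow {α : Type*} {s : Finset α} {p q : α → Prop}
    [DecidablePred p] [DecidablePred q] (hpq : ∀ x ∈ s, p x → q x) {g : α → ℝ}
    (hg : ∀ x ∈ s, 0 ≤ g x) (n : ℕ) :
    (∑ x ∈ s with p x, g x) ^ (n + 1) ≤
      (#{x ∈ s | p x ∧ g x ≠ 0} : ℝ) ^ n * ∑ x ∈ s with q x, g x ^ (n + 1) := by
  have hsupp : ∑ x ∈ s with p x, g x = ∑ x ∈ s with p x ∧ g x ≠ 0, g x := by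
    rw [← filter_filter, sum_filter_ne_zero]
  have hsub : {x ∈ s | p x ∧ g x ≠ 0} ⊆ {x ∈ s | q x} := fun x hx => by
    simp only [mem_filter] at hx ⊢
    exact ⟨hx.1, hpq x hx.1 hx.2.1⟩
  calc (∑ x ∈ s with p x, g x) ^ (n + 1)
      ≤ (#{x ∈ s | p x ∧ g x ≠ 0} : ℝ) ^ n * ∑ x ∈ s with p x ∧ g x ≠ 0, g x ^ (n + 1) :=
        hsupp ▸ pow_sum_le_card_mul_sum_pow (fun x hx => hg x (mem_filter.1 hx).1) n
    _ ≤ (#{x ∈ s | p x ∧ g x ≠ 0} : ℝ) ^ n * ∑ x ∈ s with q x, g x ^ (n + 1) := by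
        gcongr
        exact fun x hx _ => pow_nonneg (hg x (mem_filter.1 hx).1) _

theorem le_of_pow_mul_le_mul_rpow {n : ℕ} (hn : n ≠ 0) {c C N Q a b : ℝ} (hc : 0 ≤ c)
    (hC : 0 < C) (hN : 0 ≤ N) (hQ : 0 < Q) (hab : n * b + a = n + 1)
    (h : (c * Q) ^ (n + 1) ≤ N ^ n * (C * Q ^ a)) :
    (c ^ (n + 1) / C) ^ ((1 : ℝ) / n) * Q ^ b ≤ N := by
  refine le_of_pow_le_pow_left₀ hn hN ?_
  have hpow : ((c ^ (n + 1) / C) ^ ((1 : ℝ) / n) * Q ^ b) ^ n = c ^ (n + 1) / C * Q ^ (n * b) := by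
    rw [mul_pow, ← Real.rpow_natCast, ← Real.rpow_natCast (Q ^ b), ← Real.rpow_mul (by positivity),
      ← Real.rpow_mul hQ.le, one_div_mul_cancel (by exact_mod_cast hn), Real.rpow_one, mul_comm b]
  rw [hpow, div_mul_eq_mul_div, div_le_iff₀ hC]
  refine le_of_mul_le_mul_right ?_ (Real.rpow_pos_of_pos hQ a)
  calc c ^ (n + 1) * Q ^ (n * b) * Q ^ a = (c * Q) ^ (n + 1) := by
        rw [mul_assoc, ← Real.rpow_add hQ, hab, ← Nat.cast_succ, Real.rpow_natCast, mul_pow]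
    _ ≤ N ^ n * (C * Q ^ a) := h
    _ = N ^ n * C * Q ^ a := by ring

open DirichletCharacter in
/-- Assuming the eighth moment bound `Σ_{q ≤ Q} Σ*_{χ (q)} |L(1/2,χ)|⁸ ≪_ε Q^{2+ε}` over all
primitive Dirichlet characters and the first moment lower bound `Σ |L(1/2,χ)| ≫ Q` over
primitive cubic characters of conductor `≤ Q`, the number `N₃(Q)` of primitive cubic Dirichlet
characters of conductor `≤ Q` with `L(1/2,χ) ≠ 0` satisfies `N₃(Q) ≫_ε Q^{6/7-ε}`.
(Moduli `q ≥ 1` are written as `q = r + 1` with `r ∈ [0, Q)`.) -/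
theorem statement_17 [inst : ∀ p : Prop, Decidable p]
    (h8 : ∀ ε : ℝ, 0 < ε → ∃ C : ℝ, 0 < C ∧ ∀ Q : ℕ, 1 ≤ Q →
      (∑ r ∈ Finset.range Q, ∑' χ : DirichletCharacter ℂ (r + 1),
        (if χ.IsPrimitive then ‖LFunction χ (1 / 2)‖ ^ 8 else 0))
        ≤ C * (Q : ℝ) ^ ((2 : ℝ) + ε))
    (h1 : ∃ c : ℝ, 0 < c ∧ ∀ Q : ℕ, 1 ≤ Q →
      c * (Q : ℝ) ≤ ∑ r ∈ Finset.range Q, ∑' χ : DirichletCharacter ℂ (r + 1),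
        (if χ.IsPrimitive ∧ χ ^ 3 = 1 ∧ χ ≠ 1 then ‖LFunction χ (1 / 2)‖ else 0)) :
    ∀ ε : ℝ, 0 < ε → ∃ c' : ℝ, 0 < c' ∧ ∀ Q : ℕ, 1 ≤ Q →
      c' * (Q : ℝ) ^ ((6 : ℝ) / 7 - ε) ≤
        (Nat.card {x : Σ r : ℕ, DirichletCharacter ℂ (r + 1) //
          x.1 + 1 ≤ Q ∧ x.2.IsPrimitive ∧ x.2 ^ 3 = 1 ∧ x.2 ≠ 1 ∧
            LFunction x.2 (1 / 2) ≠ 0} : ℝ) := by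
  obtain ⟨c, hc, hc1⟩ := h1
  intro ε hε
  obtain ⟨C, hC, hC8⟩ := h8 (7 * ε) (by positivity)
  refine ⟨(c ^ 8 / C) ^ ((1 : ℝ) / 7), by positivity, fun Q hQ => ?_⟩
  have hQ0 : (0 : ℝ) < Q := by exact_mod_cast hQ
  have holder := pow_sum_le_card_support_pow_mul_sum_pow
    (s := (range Q).sigma fun r => (univ : Finset (DirichletCharacter ℂ (r + 1))))
    (p := fun x => x.2.IsPrimitive ∧ x.2 ^ 3 = 1 ∧ x.2 ≠ 1) (q := fun x => x.2.IsPrimitive)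
    (fun _ _ hx => hx.1) (g := fun x => ‖LFunction x.2 (1 / 2)‖) (fun _ _ => norm_nonneg _) 7
  simp only [sum_filter, norm_ne_zero_iff, and_assoc] at holder
  have hfirst := hc1 Q hQ
  have heighth := hC8 Q hQ
  rw [sum_range_tsum_eq_sum_sigma] at hfirst heighth
  rw [Nat.card_sigma_subtype_eq_card_filter]
  refine le_of_pow_mul_le_mul_rpow (n := 7) (a := 2 + 7 * ε) (by norm_num) hc.le hC
    (Nat.cast_nonneg _) hQ0 (by ring) ?_
  calc (c * Q) ^ (7 + 1) ≤ _ := pow_le_pow_left₀ (by positivity) hfirst _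
    _ ≤ _ := holder
    _ ≤ _ := by gcongr
end
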